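/- Let V be a seminormed abelian group, T, H : V → V norm non-increasing homomorphisms, and z ∈ V. Suppose there is C ≥ 0 such that ‖H^m(T^m(z)) − z‖ ≤ C for all m (H is an 'inverse up to bounded error'). Then lim_{m→∞} ‖H^m(z) − z‖/m ≤ lim_{m→∞} ‖T^m(z) − z‖/m. -/

import Mathlib

/-!
A norm non-increasing homomorphism is 1-Lipschitz, and so are all its iterates. Hence
`m ↦ ‖T^m z - z‖` is subadditive and, by Fekete's lemma, `‖T^m z - z‖ / m` converges; likewise
for `H`. Since `H^m` is 1-Lipschitz,
`‖H^m z - z‖ ≤ ‖H^m z - H^m (T^m z)‖ + ‖H^m (T^m z) - z‖ ≤ ‖z - T^m z‖ + C`,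
and the additive constant disappears after dividing by `m`.
-/

open Filter Topology

namespace LipschitzWith

variable {X : Type*} [PseudoMetricSpace X] {g : X → X}

lemma dist_iterate_le (hg : LipschitzWith 1 g) (m : ℕ) (x y : X) :
    dist (g^[m] x) (g^[m] y) ≤ dist x y := by
  simpa using (hg.iterate m).dist_le_mul x y

lemma subadditive_dist_iterate (hg : LipschitzWith 1 g) (x : X) :
    Subadditive fun m ↦ dist (g^[m] x) x := by
  intro m n
  calc dist (g^[m + n] x) x ≤ dist (g^[n] (g^[m] x)) (g^[n] x) + dist (g^[n] x) x := by
        rw [add_comm m n, Function.iterate_add_apply]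
        exact dist_triangle _ _ _
    _ ≤ dist (g^[m] x) x + dist (g^[n] x) x := by
        gcongr
        exact hg.dist_iterate_le n _ _

end LipschitzWith

namespace Subadditive

variable {u v : ℕ → ℝ}

lemma tendsto_lim_of_nonneg (hu : Subadditive u) (hu₀ : ∀ n, 0 ≤ u n) :
    Tendsto (fun n ↦ u n / n) atTop (𝓝 hu.lim) :=
  hu.tendsto_lim ⟨0, by rintro _ ⟨n, rfl⟩; exact div_nonneg (hu₀ n) n.cast_nonneg⟩

lemma lim_le_of_le_add {C : ℝ} (hu : Subadditive u) (hv : Subadditive v)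
    (hu₀ : ∀ n, 0 ≤ u n) (hv₀ : ∀ n, 0 ≤ v n) (huv : ∀ n, u n ≤ v n + C) :
    hu.lim ≤ hv.lim := by
  have hvC : Tendsto (fun n : ℕ ↦ v n / n + C / n) atTop (𝓝 (hv.lim + 0)) :=
    (hv.tendsto_lim_of_nonneg hv₀).add (tendsto_const_nhds.div_atTop tendsto_natCast_atTop_atTop)
  rw [add_zero] at hvC
  refine le_of_tendsto_of_tendsto (hu.tendsto_lim_of_nonneg hu₀) hvC ?_
  filter_upwards [eventually_gt_atTop 0] with n hn
  rw [← add_div]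
  exact div_le_div_of_nonneg_right (huv n) n.cast_nonneg

end Subadditive

lemma AddMonoidHom.lipschitzWith_one_of_norm_le {V : Type*} [SeminormedAddCommGroup V]
    {f : V →+ V} (hf : ∀ v, ‖f v‖ ≤ ‖v‖) : LipschitzWith 1 f := by
  simpa using AddMonoidHomClass.lipschitz_of_bound f 1 (by simpa using hf)

theorem limit_of_inverse_le_general {V : Type*} [SeminormedAddCommGroup V]
    (T H : V →+ V) (hT : ∀ v, ‖T v‖ ≤ ‖v‖) (hH : ∀ v, ‖H v‖ ≤ ‖v‖) (z : V)
    (C : ℝ) (hbd : ∀ m : ℕ, ‖(⇑H)^[m] ((⇑T)^[m] z) - z‖ ≤ C) :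
    ∃ L₁ L₂ : ℝ, Tendsto (fun m : ℕ => ‖(⇑H)^[m] z - z‖ / m) atTop (𝓝 L₁) ∧
      Tendsto (fun m : ℕ => ‖(⇑T)^[m] z - z‖ / m) atTop (𝓝 L₂) ∧ L₁ ≤ L₂ := by
  simp only [← dist_eq_norm] at hbd ⊢
  have hT₁ := AddMonoidHom.lipschitzWith_one_of_norm_le hT
  have hH₁ := AddMonoidHom.lipschitzWith_one_of_norm_le hH
  have sT := hT₁.subadditive_dist_iterate z
  have sH := hH₁.subadditive_dist_iterate z
  have hHT : ∀ m, dist ((⇑H)^[m] z) z ≤ dist ((⇑T)^[m] z) z + C := fun m ↦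
    calc dist ((⇑H)^[m] z) z
        ≤ dist ((⇑H)^[m] z) ((⇑H)^[m] ((⇑T)^[m] z)) + dist ((⇑H)^[m] ((⇑T)^[m] z)) z :=
          dist_triangle _ _ _
      _ ≤ dist ((⇑T)^[m] z) z + C := by
          rw [dist_comm ((⇑T)^[m] z)]
          exact add_le_add (hH₁.dist_iterate_le m _ _) (hbd m)
  exact ⟨sH.lim, sT.lim, sH.tendsto_lim_of_nonneg fun _ ↦ dist_nonneg,
    sT.tendsto_lim_of_nonneg fun _ ↦ dist_nonneg,
    sH.lim_le_of_le_add sT (fun _ ↦ dist_nonneg) (fun _ ↦ dist_nonneg) hHT⟩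

/-- If `H` is an inverse of `T` up to bounded error (`‖H^m (T^m z) - z‖ ≤ C`), and both are
norm non-increasing, then `lim ‖H^m z - z‖ / m ≤ lim ‖T^m z - z‖ / m`. -/
theorem limit_of_inverse_le {V : Type*} [SeminormedAddCommGroup V]
    (T H : V →+ V) (hT : ∀ v, ‖T v‖ ≤ ‖v‖) (hH : ∀ v, ‖H v‖ ≤ ‖v‖) (z : V)
    (C : ℝ) (hC : 0 ≤ C) (hbd : ∀ m : ℕ, ‖(⇑H)^[m] ((⇑T)^[m] z) - z‖ ≤ C) :
    ∃ L₁ L₂ : ℝ, Tendsto (fun m : ℕ => ‖(⇑H)^[m] z - z‖ / m) atTop (𝓝 L₁) ∧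
      Tendsto (fun m : ℕ => ‖(⇑T)^[m] z - z‖ / m) atTop (𝓝 L₂) ∧ L₁ ≤ L₂ :=
  limit_of_inverse_le_general T H hT hH z C hbd
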